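/- (Nonconservation of angular momentum, Theorem 1.) Let r satisfy the relativistic two-body equation and let h(t) = r(t) × r'(t). Then ‖h(t)‖ = ‖h(0)‖ · exp(4ε(1/‖r(0)‖ − 1/‖r(t)‖)) for all t. Consequently, if ε ≠ 0, h(0) ≠ 0, and there is a time t₁ with ‖r(t₁)‖ ≠ ‖r(0)‖, then ‖h(t₁)‖ ≠ ‖h(0)‖, i.e. the magnitude of the angular momentum is not conserved. -/

import Mathlib

/-!
Write `r'' = α r + β r'` with `β = 4ε⟪r, r'⟫ / ‖r‖³`. Then `h' = r' × r' + r × r'' = β h`, and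
`β` is the derivative of `g(t) = 4ε (1/‖r(0)‖ - 1/‖r(t)‖)`, so `h(t) = exp (g t) • h(0)` as vectors.
Taking norms gives the formula; if `ε ≠ 0` and `‖r(t₁)‖ ≠ ‖r(0)‖` then `g(t₁) ≠ 0`, so the factor
`exp (g t₁)` differs from `1`.
-/

noncomputable def cross3 (a b : EuclideanSpace ℝ (Fin 3)) : EuclideanSpace ℝ (Fin 3) :=
  WithLp.toLp 2 ![a 1 * b 2 - a 2 * b 1, a 2 * b 0 - a 0 * b 2, a 0 * b 1 - a 1 * b 0]

open RealInnerProductSpace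

noncomputable def cross3L :
    EuclideanSpace ℝ (Fin 3) →L[ℝ] EuclideanSpace ℝ (Fin 3) →L[ℝ] EuclideanSpace ℝ (Fin 3) :=
  let e := WithLp.linearEquiv 2 ℝ (Fin 3 → ℝ)
  ((crossProduct.compl₁₂ e.toLinearMap e.toLinearMap).compr₂
    e.symm.toLinearMap).toContinuousBilinearMap

theorem cross3L_apply (a b : EuclideanSpace ℝ (Fin 3)) : cross3L a b = cross3 a b := rfl

theorem cross3_self (a : EuclideanSpace ℝ (Fin 3)) : cross3 a a = 0 := by
  rw [← cross3L_apply]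
  simp [cross3L, cross_self]

theorem cross3_smul_add_smul (a b : EuclideanSpace ℝ (Fin 3)) (c d : ℝ) :
    cross3 a (c • a + d • b) = d • cross3 a b := by
  rw [← cross3L_apply, map_add, map_smul, map_smul, cross3L_apply, cross3L_apply, cross3_self,
    smul_zero, zero_add]

namespace HasDerivAt

theorem cross3 {u v : ℝ → EuclideanSpace ℝ (Fin 3)} {u' v' : EuclideanSpace ℝ (Fin 3)} {t : ℝ}
    (hu : HasDerivAt u u' t) (hv : HasDerivAt v v' t) :
    HasDerivAt (fun s => _root_.cross3 (u s) (v s))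
      (_root_.cross3 (u t) v' + _root_.cross3 u' (v t)) t :=
  cross3L.hasDerivAt_of_bilinear (fun _ => hu) (fun _ => hv)

theorem cross3_of_hasDerivAt_smul_add_smul {x v : ℝ → EuclideanSpace ℝ (Fin 3)} {α β t : ℝ}
    (hx : HasDerivAt x (v t) t) (hv : HasDerivAt v (α • x t + β • v t) t) :
    HasDerivAt (fun s => _root_.cross3 (x s) (v s)) (β • _root_.cross3 (x t) (v t)) t := by
  simpa only [cross3_smul_add_smul, cross3_self, add_zero] using hx.cross3 hv

variable {F : Type*} [NormedAddCommGroup F] [InnerProductSpace ℝ F] {f : ℝ → F} {f' : F} {t : ℝ}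

theorem norm (hf : HasDerivAt f f' t) (h0 : f t ≠ 0) :
    HasDerivAt (fun s => ‖f s‖) (⟪f t, f'⟫ / ‖f t‖) t := by
  have h := hf.norm_sq.sqrt (by simpa using h0)
  simp only [Real.sqrt_sq (norm_nonneg _)] at h
  convert h using 1
  ring

theorem inv_norm (hf : HasDerivAt f f' t) (h0 : f t ≠ 0) :
    HasDerivAt (fun s => ‖f s‖⁻¹) (-⟪f t, f'⟫ / ‖f t‖ ^ 3) t := by
  have hρ : ‖f t‖ ≠ 0 := norm_ne_zero_iff.mpr h0
  refine ((hf.norm h0).inv hρ).congr_deriv ?_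
  field_simp

end HasDerivAt

theorem eq_exp_sub_smul_of_hasDerivAt {E : Type*} [NormedAddCommGroup E] [NormedSpace ℝ E]
    {f : ℝ → E} {g g' : ℝ → ℝ} (hg : ∀ t, HasDerivAt g (g' t) t)
    (hf : ∀ t, HasDerivAt f (g' t • f t) t) (s t : ℝ) :
    f t = Real.exp (g t - g s) • f s := by
  have hconst : ∀ u, HasDerivAt (fun u => Real.exp (-g u) • f u) 0 u := fun u =>
    ((hg u).neg.exp.smul (hf u)).congr_deriv (by rw [smul_smul, ← add_smul]; ring_nf; simp)
  have := is_const_of_deriv_eq_zero (fun u => (hconst u).differentiableAt)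
    (fun u => (hconst u).deriv) t s
  rw [sub_eq_add_neg, Real.exp_add, mul_smul, ← this, smul_smul, ← Real.exp_add]
  simp

theorem angular_momentum_not_conserved (ε : ℝ) (r : ℝ → EuclideanSpace ℝ (Fin 3))
    (hr : ContDiff ℝ 2 r) (hrne : ∀ t, r t ≠ 0)
    (heq : ∀ t, deriv (deriv r) t =
      (-(1 / ‖r t‖ ^ 3)) • r t +
        (ε / ‖r t‖ ^ 3) •
          ((4 / ‖r t‖ - ‖deriv r t‖ ^ 2) • r t +
            (4 * (inner ℝ (r t) (deriv r t) : ℝ)) • deriv r t))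
    (h : ℝ → EuclideanSpace ℝ (Fin 3))
    (hh : ∀ t, h t = cross3 (r t) (deriv r t)) :
    (∀ t : ℝ, ‖h t‖ = ‖h 0‖ * Real.exp (4 * ε * (1 / ‖r 0‖ - 1 / ‖r t‖))) ∧
      (ε ≠ 0 → h 0 ≠ 0 → ∀ t₁ : ℝ, ‖r t₁‖ ≠ ‖r 0‖ → ‖h t₁‖ ≠ ‖h 0‖) := by
  set g : ℝ → ℝ := fun t => 4 * ε * (1 / ‖r 0‖ - 1 / ‖r t‖)
  set β : ℝ → ℝ := fun t => ε / ‖r t‖ ^ 3 * (4 * ⟪r t, deriv r t⟫)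
  have hv : ∀ t, HasDerivAt r (deriv r t) t := fun t =>
    (hr.differentiable (by norm_num) t).hasDerivAt
  have ha : ∀ t, HasDerivAt (deriv r) (deriv (deriv r) t) t := fun t =>
    ((hr.deriv' (n := 1)).differentiable (by norm_num) t).hasDerivAt
  have hg : ∀ t, HasDerivAt g (β t) t := fun t => by
    simp only [g, one_div]
    exact (((hv t).inv_norm (hrne t)).const_sub _ |>.const_mul _).congr_deriv (by ring)
  have hh' : ∀ t, HasDerivAt h (β t • h t) t := fun t => by
    have hacc : deriv (deriv r) t =
        (-(1 / ‖r t‖ ^ 3) + ε / ‖r t‖ ^ 3 * (4 / ‖r t‖ - ‖deriv r t‖ ^ 2)) • r t +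
          β t • deriv r t := by
      rw [heq t]; module
    rw [funext hh]
    exact (hv t).cross3_of_hasDerivAt_smul_add_smul (hacc ▸ ha t)
  have hnorm : ∀ t, ‖h t‖ = ‖h 0‖ * Real.exp (g t) := fun t => by
    rw [eq_exp_sub_smul_of_hasDerivAt hg hh' 0 t, norm_smul,
      Real.norm_of_nonneg (Real.exp_pos _).le]
    simp [g, mul_comm]
  refine ⟨hnorm, fun hε h0 t₁ ht₁ => ?_⟩
  have hg₁ : g t₁ ≠ 0 := by
    refine mul_ne_zero (by simpa using hε) (sub_ne_zero.mpr ?_)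
    simpa only [one_div, ne_eq, inv_inj] using ht₁.symm
  rw [hnorm t₁, Ne, mul_right_eq_self₀, Real.exp_eq_one_iff, not_or]
  exact ⟨hg₁, norm_ne_zero_iff.mpr h0⟩
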